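/- Adding observations cannot increase GP posterior variance: for a positive semidefinite kernel k, noise λ > 0, and training sets X ⊆ X' (X' obtained by adding points), the posterior variance at any test point x* computed with X' is at most the posterior variance computed with X. -/

import Mathlib

open Matrix Finset

/-- The GP posterior variance at a test point `xs`: `σ²_X(x*) = k(x*,x*) −
k_X(x*)ᵀ (K_X + λI)⁻¹ k_X(x*)` for the training set `X`. -/
noncomputable def gpPosteriorVariance {d : ℕ}
    (k : (Fin d → ℝ) → (Fin d → ℝ) → ℝ) (lam : ℝ)
    {N : ℕ} (X : Fin N → (Fin d → ℝ)) (xs : Fin d → ℝ) : ℝ :=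
  k xs xs -
    (fun i => k xs (X i)) ⬝ᵥ
      (((Matrix.of fun i j => k (X i) (X j)) + lam • (1 : Matrix (Fin N) (Fin N) ℝ))⁻¹ *ᵥ
        fun i => k xs (X i))


lemma key {n : ℕ} (A : Matrix (Fin n) (Fin n) ℝ) (hA : A.PosDef) (b c : Fin n → ℝ) :
    2 * (b ⬝ᵥ c) - c ⬝ᵥ (A *ᵥ c) ≤ b ⬝ᵥ (A⁻¹ *ᵥ b) := by
  have hAsymm : Aᵀ = A := hA.isHermitian
  have hinv : A * A⁻¹ = 1 := mul_nonsing_inv A hA.det_pos.ne'.isUnit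
  set w := A⁻¹ *ᵥ b with hw
  have hAw : A *ᵥ w = b := by rw [hw, mulVec_mulVec, hinv, one_mulVec]
  have h0 : 0 ≤ (c - w) ⬝ᵥ (A *ᵥ (c - w)) := by
    have := hA.posSemidef.dotProduct_mulVec_nonneg (c - w)
    simpa using this
  have hwAc : w ⬝ᵥ (A *ᵥ c) = b ⬝ᵥ c := by
    rw [dotProduct_mulVec, ← mulVec_transpose, hAsymm, hAw]
  have hcAw : c ⬝ᵥ (A *ᵥ w) = b ⬝ᵥ c := by rw [hAw, dotProduct_comm]
  have hwAw : w ⬝ᵥ (A *ᵥ w) = b ⬝ᵥ (A⁻¹ *ᵥ b) := by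
    rw [hAw, hw, dotProduct_comm]
  have hexp : (c - w) ⬝ᵥ (A *ᵥ (c - w)) =
      c ⬝ᵥ (A *ᵥ c) - 2 * (b ⬝ᵥ c) + b ⬝ᵥ (A⁻¹ *ᵥ b) := by
    rw [mulVec_sub, sub_dotProduct, dotProduct_sub, dotProduct_sub, hwAc, hcAw, hwAw]
    ring
  linarith [hexp ▸ h0]

lemma kermat_posdef {d n : ℕ} (k : (Fin d → ℝ) → (Fin d → ℝ) → ℝ)
    (hsymm : ∀ x y, k x y = k y x)
    (hpsd : ∀ (M : ℕ) (z : Fin M → (Fin d → ℝ)) (c : Fin M → ℝ),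
      0 ≤ ∑ i, ∑ j, c i * k (z i) (z j) * c j)
    (lam : ℝ) (hlam : 0 < lam) (X : Fin n → (Fin d → ℝ)) :
    ((Matrix.of fun i j => k (X i) (X j)) + lam • (1 : Matrix (Fin n) (Fin n) ℝ)).PosDef := by
  rw [posDef_iff_dotProduct_mulVec]
  constructor
  · ext i j
    simp [conjTranspose_apply, Matrix.add_apply, Matrix.one_apply, hsymm (X i) (X j), eq_comm]
  · intro x hx
    have h1 : x ⬝ᵥ ((Matrix.of fun i j => k (X i) (X j)) *ᵥ x) =
        ∑ i, ∑ j, x i * k (X i) (X j) * x j := by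
      simp [dotProduct, mulVec, Finset.mul_sum, mul_assoc]
    have h2 : (0:ℝ) < x ⬝ᵥ x := by
      have hne : x ⬝ᵥ x ≠ 0 := fun h => hx (dotProduct_self_eq_zero.mp h)
      have hnn : (0:ℝ) ≤ x ⬝ᵥ x := Finset.sum_nonneg fun i _ => mul_self_nonneg (x i)
      exact hnn.lt_of_ne (Ne.symm hne)
    have := hpsd n X x
    simp only [star_trivial, add_mulVec, dotProduct_add, smul_mulVec, one_mulVec,
      dotProduct_smul, smul_eq_mul]
    rw [h1] at *
    nlinarith

lemma sum_via_inj {N N' : ℕ} (ι : Fin N → Fin N') (hι : Function.Injective ι)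
    (f : Fin N' → ℝ) (hf : ∀ j, (∀ i, ι i ≠ j) → f j = 0) :
    ∑ j, f j = ∑ i, f (ι i) := by
  rw [← Finset.sum_image (s := Finset.univ) (g := ι) (fun i _ j _ h => hι h)]
  exact (Finset.sum_subset (Finset.subset_univ _) fun j _ hj => hf j (fun i hij => hj
    (Finset.mem_image.mpr ⟨i, Finset.mem_univ i, hij⟩))).symm

/-- Adding observations cannot increase the GP posterior variance: for a
symmetric positive semidefinite kernel `k`, noise variance `λ > 0`, and
training sets `X ⊆ X'` (the larger set `X'` contains all points of `X`, as
witnessed by an injection `ι` with `X' ∘ ι = X`), the posterior variance at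
any test point computed with `X'` is at most the one computed with `X`. -/

theorem gp_posterior_variance_monotone {d N N' : ℕ}
    (k : (Fin d → ℝ) → (Fin d → ℝ) → ℝ)
    (hsymm : ∀ x y, k x y = k y x)
    (hpsd : ∀ (M : ℕ) (z : Fin M → (Fin d → ℝ)) (c : Fin M → ℝ),
      0 ≤ ∑ i, ∑ j, c i * k (z i) (z j) * c j)
    (lam : ℝ) (hlam : 0 < lam)
    (X : Fin N → (Fin d → ℝ)) (X' : Fin N' → (Fin d → ℝ))
    (ι : Fin N → Fin N') (hι : Function.Injective ι) (hsub : X' ∘ ι = X)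
    (xs : Fin d → ℝ) :
    gpPosteriorVariance k lam X' xs ≤ gpPosteriorVariance k lam X xs := by
  set A : Matrix (Fin N) (Fin N) ℝ :=
    (Matrix.of fun i j => k (X i) (X j)) + lam • 1 with hAdef
  set A' : Matrix (Fin N') (Fin N') ℝ :=
    (Matrix.of fun i j => k (X' i) (X' j)) + lam • 1 with hA'def
  have hA : A.PosDef := kermat_posdef k hsymm hpsd lam hlam X
  have hA' : A'.PosDef := kermat_posdef k hsymm hpsd lam hlam X'
  set b : Fin N → ℝ := fun i => k xs (X i) with hbdef
  set b' : Fin N' → ℝ := fun j => k xs (X' j) with hb'def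
  have hXι : ∀ i, X' (ι i) = X i := fun i => congrFun hsub i
  have hbι : ∀ i, b' (ι i) = b i := fun i => by simp [hbdef, hb'def, hXι]
  have hAι : ∀ i j, A' (ι i) (ι j) = A i j := by
    intro i j
    simp only [hAdef, hA'def, Matrix.add_apply, Matrix.of_apply, Matrix.smul_apply,
      Matrix.one_apply, hXι, smul_eq_mul]
    congr 1
    by_cases h : i = j
    · simp [h]
    · simp only [h, if_false]
      rw [if_neg fun hc => h (hι hc)]
  set c : Fin N → ℝ := A⁻¹ *ᵥ b with hcdef
  set c' : Fin N' → ℝ := Function.extend ι c 0 with hc'def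
  have hc'ι : ∀ i, c' (ι i) = c i := fun i => hι.extend_apply c 0 i
  have hc'0 : ∀ j, (∀ i, ι i ≠ j) → c' j = 0 := by
    intro j hj
    rw [hc'def, Function.extend_apply' _ _ _ (fun ⟨i, hi⟩ => hj i hi)]
    rfl
  -- dot products transfer
  have hbc : b' ⬝ᵥ c' = b ⬝ᵥ c := by
    rw [dotProduct, dotProduct, sum_via_inj ι hι _ (fun j hj => by rw [hc'0 j hj, mul_zero])]
    exact Finset.sum_congr rfl fun i _ => by rw [hbι, hc'ι]
  have hquad : c' ⬝ᵥ (A' *ᵥ c') = c ⬝ᵥ (A *ᵥ c) := by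
    rw [dotProduct, dotProduct,
      sum_via_inj ι hι _ (fun j hj => by rw [hc'0 j hj, zero_mul])]
    refine Finset.sum_congr rfl fun i _ => ?_
    rw [hc'ι]
    congr 1
    show ∑ j, A' (ι i) j * c' j = ∑ j, A i j * c j
    rw [sum_via_inj ι hι _ (fun j hj => by rw [hc'0 j hj, mul_zero])]
    exact Finset.sum_congr rfl fun j _ => by rw [hAι, hc'ι]
  -- equality : b ⬝ᵥ A⁻¹ b = 2 b⬝c - c⬝Ac
  have hAinv : A * A⁻¹ = 1 := mul_nonsing_inv A hA.det_pos.ne'.isUnit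
  have hAc : A *ᵥ c = b := by rw [hcdef, mulVec_mulVec, hAinv, one_mulVec]
  have heq : b ⬝ᵥ (A⁻¹ *ᵥ b) = 2 * (b ⬝ᵥ c) - c ⬝ᵥ (A *ᵥ c) := by
    rw [hAc, ← hcdef, dotProduct_comm c b]; ring
  have hineq : b ⬝ᵥ (A⁻¹ *ᵥ b) ≤ b' ⬝ᵥ (A'⁻¹ *ᵥ b') := by
    calc b ⬝ᵥ (A⁻¹ *ᵥ b) = 2 * (b' ⬝ᵥ c') - c' ⬝ᵥ (A' *ᵥ c') := by rw [heq, hbc, hquad]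
    _ ≤ b' ⬝ᵥ (A'⁻¹ *ᵥ b') := key A' hA' b' c'
  simp only [gpPosteriorVariance]
  exact sub_le_sub_left hineq _
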